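/- Let 𝔓 = {{0}, M, N, N̂, X} be a pentagon subspace lattice in a Banach space X (with N ⊊ N̂, M ∨ N = X, M ∧ N̂ = {0}). Then the family of closed subspaces invariant under all rank-one operators in Alg(𝔓) equals 𝔓 ∪ {K closed : N ⊆ K ⊆ N̂}; in particular, if N̂/N has dimension greater than 1 then 𝔓 is not strongly reflexive (N_* = N̂ ≠ N). -/

import Mathlib

/-! A rank-one operator `e ⊗ η` leaves a subspace `K` invariant iff `e ∈ K` or `η` vanishes on
`K`. So `e ⊗ η ∈ Alg 𝔓` whenever `e ∈ N` and `η ⊥ M`, or `e ∈ M` and `η ⊥ N̂`; with Hahn–Banach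
this forces a rank-one-invariant `K ⊄ M` to contain `N` and a `K ⊄ N̂` to contain `M`, which
leaves only the members of `𝔓` and the closed `K` between `N` and `N̂`. Conversely such a `K` is
invariant under every `e ⊗ η ∈ Alg 𝔓`: if `e ∉ N` then `η ⊥ N`, and `η ⊥ N̂` unless `e ∈ N̂`, in
which case `e ∈ M ∩ N̂ = 0` or `η ⊥ M + N`, i.e. `η = 0`. Finally `M₋ = N̂` while `L₋ = X` for the
other `L ⊄ N`, so `N_* = N̂`. -/

open ContinuousLinearMap

/-- The closed linear span (join) of a family of subspaces. -/
noncomputable def cJoin {X : Type*} [NormedAddCommGroup X] [NormedSpace ℂ X]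
    (S : Set (Submodule ℂ X)) : Submodule ℂ X :=
  (sSup S).topologicalClosure

/-- Join of two subspaces in the lattice of closed subspaces. -/
noncomputable def cJoin2 {X : Type*} [NormedAddCommGroup X] [NormedSpace ℂ X]
    (M N : Submodule ℂ X) : Submodule ℂ X :=
  (M ⊔ N).topologicalClosure

/-- A subspace lattice: a complete lattice of closed subspaces containing the trivial ones. -/
def IsSubspaceLattice {X : Type*} [NormedAddCommGroup X] [NormedSpace ℂ X]
    (L : Set (Submodule ℂ X)) : Prop :=
  (∀ M ∈ L, IsClosed (M : Set X)) ∧ ⊥ ∈ L ∧ ⊤ ∈ L ∧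
    ∀ S ⊆ L, cJoin S ∈ L ∧ sInf S ∈ L

/-- Alg(F): bounded operators leaving every member of F invariant. -/
def algOf {X : Type*} [NormedAddCommGroup X] [NormedSpace ℂ X]
    (L : Set (Submodule ℂ X)) : Set (X →L[ℂ] X) :=
  {A | ∀ M ∈ L, ∀ x ∈ M, A x ∈ M}

/-- Lat(T): closed subspaces invariant under every operator in T. -/
def latOf {X : Type*} [NormedAddCommGroup X] [NormedSpace ℂ X]
    (T : Set (X →L[ℂ] X)) : Set (Submodule ℂ X) :=
  {M | IsClosed (M : Set X) ∧ ∀ A ∈ T, ∀ x ∈ M, A x ∈ M}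

/-- The rank-one operator e ⊗ η : x ↦ η(x) • e. -/
noncomputable def rankOne {X : Type*} [NormedAddCommGroup X] [NormedSpace ℂ X]
    (e : X) (η : X →L[ℂ] ℂ) : X →L[ℂ] X :=
  η.smulRight e

/-- The rank-one operators in a set of operators. -/
noncomputable def Rk1 {X : Type*} [NormedAddCommGroup X] [NormedSpace ℂ X]
    (T : Set (X →L[ℂ] X)) : Set (X →L[ℂ] X) :=
  {A ∈ T | ∃ (e : X) (η : X →L[ℂ] ℂ), e ≠ 0 ∧ η ≠ 0 ∧ A = rankOne e η}

/-- M₋ = ⋁{K ∈ L : M ⊄ K}. -/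
noncomputable def mMinus {X : Type*} [NormedAddCommGroup X] [NormedSpace ℂ X]
    (L : Set (Submodule ℂ X)) (M : Submodule ℂ X) : Submodule ℂ X :=
  cJoin {K | K ∈ L ∧ ¬ M ≤ K}

/-- M₊ = ⋀{K ∈ L : K ⊄ M}. -/
noncomputable def mPlus {X : Type*} [NormedAddCommGroup X] [NormedSpace ℂ X]
    (L : Set (Submodule ℂ X)) (M : Submodule ℂ X) : Submodule ℂ X :=
  sInf {K | K ∈ L ∧ ¬ K ≤ M}

/-- N_* = ⋀{M₋ : M ∈ L, M ⊄ N}. -/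
noncomputable def nStar {X : Type*} [NormedAddCommGroup X] [NormedSpace ℂ X]
    (L : Set (Submodule ℂ X)) (N : Submodule ℂ X) : Submodule ℂ X :=
  sInf {P | ∃ M, M ∈ L ∧ ¬ M ≤ N ∧ P = mMinus L M}

/-- The cyclic subspace [Alg(L)x]: closed linear span of the orbit of x under Alg(L). -/
noncomputable def cyclicSubspace {X : Type*} [NormedAddCommGroup X] [NormedSpace ℂ X]
    (L : Set (Submodule ℂ X)) (x : X) : Submodule ℂ X :=
  (Submodule.span ℂ ((fun A : X →L[ℂ] X => A x) '' algOf L)).topologicalClosure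

/-- The pinch points of a family of subspaces. -/
def pinOf {X : Type*} [NormedAddCommGroup X] [NormedSpace ℂ X]
    (L : Set (Submodule ℂ X)) : Set (Submodule ℂ X) :=
  {P | P ∈ L ∧ ∀ M ∈ L, M ≤ P ∨ P ≤ M}



section RankOne

variable {X : Type*} [NormedAddCommGroup X] [NormedSpace ℂ X]

lemma exists_dual_vanishing_on_of_notMem {S : Submodule ℂ X} (hS : IsClosed (S : Set X))
    {x : X} (hx : x ∉ S) : ∃ η : X →L[ℂ] ℂ, (∀ s ∈ S, η s = 0) ∧ η x ≠ 0 := by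
  have : IsClosed (S : Set X) := hS
  obtain ⟨f, hf⟩ := SeparatingDual.exists_ne_zero (R := ℂ) (x := S.mkQL x)
    (by simpa [Submodule.Quotient.mk_eq_zero] using hx)
  exact ⟨f.comp S.mkQL, fun s hs => by simp [(Submodule.Quotient.mk_eq_zero S).2 hs], hf⟩

lemma le_cJoin {S : Set (Submodule ℂ X)} {K : Submodule ℂ X} (hK : K ∈ S) : K ≤ cJoin S :=
  (le_sSup hK).trans (sSup S).le_topologicalClosure

lemma cJoin_le {S : Set (Submodule ℂ X)} {P : Submodule ℂ X} (hP : IsClosed (P : Set X))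
    (hS : ∀ K ∈ S, K ≤ P) : cJoin S ≤ P :=
  Submodule.topologicalClosure_minimal _ (sSup_le hS) hP

lemma cJoin2_le {M N P : Submodule ℂ X} (hP : IsClosed (P : Set X)) (hM : M ≤ P) (hN : N ≤ P) :
    cJoin2 M N ≤ P :=
  Submodule.topologicalClosure_minimal _ (sup_le hM hN) hP

lemma cJoin2_le_cJoin {S : Set (Submodule ℂ X)} {M N : Submodule ℂ X} (hM : M ∈ S) (hN : N ∈ S) :
    cJoin2 M N ≤ cJoin S :=
  Submodule.topologicalClosure_mono (sup_le (le_sSup hM) (le_sSup hN))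

lemma eq_zero_of_cJoin2_eq_top {M N : Submodule ℂ X} (hjoin : cJoin2 M N = ⊤)
    {η : X →L[ℂ] ℂ} (hM : ∀ x ∈ M, η x = 0) (hN : ∀ x ∈ N, η x = 0) : η = 0 := by
  have hker : cJoin2 M N ≤ η.ker := cJoin2_le η.isClosed_ker hM hN
  rw [hjoin] at hker
  ext x
  exact hker Submodule.mem_top

@[simp]
lemma rankOne_apply (e : X) (η : X →L[ℂ] ℂ) (x : X) : rankOne e η x = η x • e := rfl

lemma mem_of_rankOne_apply_mem {K : Submodule ℂ X} {e x : X} {η : X →L[ℂ] ℂ}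
    (hx : η x ≠ 0) (h : rankOne e η x ∈ K) : e ∈ K :=
  (K.smul_mem_iff hx).1 h

lemma rankOne_mapsTo_iff {K : Submodule ℂ X} {e : X} {η : X →L[ℂ] ℂ} :
    (∀ x ∈ K, rankOne e η x ∈ K) ↔ e ∈ K ∨ ∀ x ∈ K, η x = 0 := by
  refine ⟨fun h => ?_, ?_⟩
  · by_contra! hne
    obtain ⟨heK, x, hxK, hx⟩ := hne
    exact heK (mem_of_rankOne_apply_mem hx (h x hxK))
  · rintro (he | hη) x hx
    · exact K.smul_mem _ he
    · simp [hη x hx]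

lemma rankOne_mem_algOf_iff {L : Set (Submodule ℂ X)} {e : X} {η : X →L[ℂ] ℂ} :
    rankOne e η ∈ algOf L ↔ ∀ K ∈ L, e ∈ K ∨ ∀ x ∈ K, η x = 0 :=
  forall₂_congr fun _ _ => rankOne_mapsTo_iff

lemma mem_latOf_Rk1_algOf {L : Set (Submodule ℂ X)} {K : Submodule ℂ X} (hKL : K ∈ L)
    (hK : IsClosed (K : Set X)) : K ∈ latOf (Rk1 (algOf L)) :=
  ⟨hK, fun _ hA => hA.1 K hKL⟩

lemma le_of_mem_latOf_Rk1 {T : Set (X →L[ℂ] X)} {K S P : Submodule ℂ X}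
    (hK : K ∈ latOf (Rk1 T)) (hS : IsClosed (S : Set X)) (hKS : ¬ K ≤ S)
    (hT : ∀ e ∈ P, ∀ η : X →L[ℂ] ℂ, (∀ s ∈ S, η s = 0) → rankOne e η ∈ T) : P ≤ K := by
  obtain ⟨x, hxK, hxS⟩ := SetLike.not_le_iff_exists.1 hKS
  obtain ⟨η, hηS, hηx⟩ := exists_dual_vanishing_on_of_notMem hS hxS
  have hη0 : η ≠ 0 := fun h => hηx (by simp [h])
  intro e he
  rcases eq_or_ne e 0 with rfl | he0
  · exact K.zero_mem
  exact mem_of_rankOne_apply_mem hηx (hK.2 _ ⟨hT e he η hηS, e, η, he0, hη0, rfl⟩ x hxK)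

end RankOne

namespace Pentagon

variable {X : Type*} [NormedAddCommGroup X] [NormedSpace ℂ X] {M N Nh : Submodule ℂ X}

local notation "𝔓" => ({⊥, M, N, Nh, ⊤} : Set (Submodule ℂ X))

lemma not_le_N_of_cJoin2_eq_top (hNc : IsClosed (N : Set X)) (hNNh : N < Nh)
    (hjoin : cJoin2 M N = ⊤) : ¬ M ≤ N := fun hMN =>
  (hNNh.trans_le le_top).ne (top_le_iff.1 (hjoin ▸ cJoin2_le hNc hMN le_rfl))

lemma not_le_M_of_Nh_le (hNNh : N < Nh) (hmeet : M ⊓ Nh = ⊥) {K : Submodule ℂ X}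
    (hK : Nh ≤ K) : ¬ K ≤ M := fun hKM =>
  (bot_le.trans_lt hNNh).ne' (le_bot_iff.1 (hmeet ▸ le_inf (hK.trans hKM) le_rfl))

lemma rankOne_mem_algOf_of_mem_N (hNNh : N ≤ Nh) {e : X} (he : e ∈ N) {η : X →L[ℂ] ℂ}
    (hη : ∀ x ∈ M, η x = 0) : rankOne e η ∈ algOf 𝔓 := by
  simp only [rankOne_mem_algOf_iff, Set.mem_insert_iff, Set.mem_singleton_iff,
    forall_eq_or_imp, forall_eq]
  exact ⟨Or.inr (by simp), Or.inr hη, Or.inl he, Or.inl (hNNh he), Or.inl Submodule.mem_top⟩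

lemma rankOne_mem_algOf_of_mem_M (hNNh : N ≤ Nh) {e : X} (he : e ∈ M) {η : X →L[ℂ] ℂ}
    (hη : ∀ x ∈ Nh, η x = 0) : rankOne e η ∈ algOf 𝔓 := by
  simp only [rankOne_mem_algOf_iff, Set.mem_insert_iff, Set.mem_singleton_iff,
    forall_eq_or_imp, forall_eq]
  exact ⟨Or.inr (by simp), Or.inl he, Or.inr fun x hx => hη x (hNNh hx), Or.inr hη,
    Or.inl Submodule.mem_top⟩

lemma mem_pentagon_of_mem_latOf_Rk1 (hMc : IsClosed (M : Set X)) (hNhc : IsClosed (Nh : Set X))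
    (hNNh : N ≤ Nh) (hjoin : cJoin2 M N = ⊤) (hmeet : M ⊓ Nh = ⊥) {K : Submodule ℂ X}
    (hK : K ∈ latOf (Rk1 (algOf 𝔓))) : K ∈ 𝔓 ∨ N ≤ K ∧ K ≤ Nh := by
  have hNK (hKM : ¬ K ≤ M) : N ≤ K :=
    le_of_mem_latOf_Rk1 hK hMc hKM fun _ he _ hη => rankOne_mem_algOf_of_mem_N hNNh he hη
  have hMK (hKNh : ¬ K ≤ Nh) : M ≤ K :=
    le_of_mem_latOf_Rk1 hK hNhc hKNh fun _ he _ hη => rankOne_mem_algOf_of_mem_M hNNh he hη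
  by_cases hKM : K ≤ M <;> by_cases hKNh : K ≤ Nh
  · have hK0 : K = ⊥ := le_bot_iff.1 (hmeet ▸ le_inf hKM hKNh)
    simp [hK0]
  · have hKM' : K = M := le_antisymm hKM (hMK hKNh)
    simp [hKM']
  · exact Or.inr ⟨hNK hKM, hKNh⟩
  · have hK1 : K = ⊤ := top_le_iff.1 (hjoin ▸ cJoin2_le hK.1 (hMK hKNh) (hNK hKM))
    simp [hK1]

lemma mem_latOf_Rk1_of_le_of_le (hjoin : cJoin2 M N = ⊤) (hmeet : M ⊓ Nh = ⊥) {K : Submodule ℂ X}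
    (hK : IsClosed (K : Set X)) (hNK : N ≤ K) (hKNh : K ≤ Nh) : K ∈ latOf (Rk1 (algOf 𝔓)) := by
  refine ⟨hK, ?_⟩
  rintro _ ⟨hA, e, η, he0, hη0, rfl⟩
  have hinv := rankOne_mem_algOf_iff.1 hA
  rw [rankOne_mapsTo_iff]
  rcases hinv N (by simp) with heN | hηN
  · exact Or.inl (hNK heN)
  rcases hinv Nh (by simp) with heNh | hηNh
  · rcases hinv M (by simp) with heM | hηM
    · exact absurd ((Submodule.mem_bot ℂ).1 (hmeet ▸ Submodule.mem_inf.2 ⟨heM, heNh⟩)) he0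
    · exact absurd (eq_zero_of_cJoin2_eq_top hjoin hηM hηN) hη0
  · exact Or.inr fun x hx => hηNh x (hKNh hx)

lemma latOf_Rk1_algOf_eq (hMc : IsClosed (M : Set X)) (hNc : IsClosed (N : Set X))
    (hNhc : IsClosed (Nh : Set X)) (hNNh : N ≤ Nh) (hjoin : cJoin2 M N = ⊤)
    (hmeet : M ⊓ Nh = ⊥) :
    latOf (Rk1 (algOf 𝔓)) = 𝔓 ∪ {K | IsClosed (K : Set X) ∧ N ≤ K ∧ K ≤ Nh} := by
  have hclosed : ∀ K ∈ 𝔓, IsClosed (K : Set X) := by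
    simp [hMc, hNc, hNhc]
  refine Set.ext fun K => ⟨fun hK => ?_, ?_⟩
  · rcases mem_pentagon_of_mem_latOf_Rk1 hMc hNhc hNNh hjoin hmeet hK with h | h
    · exact Or.inl h
    · exact Or.inr ⟨hK.1, h⟩
  · rintro (hK | ⟨hKc, hNK, hKNh⟩)
    · exact mem_latOf_Rk1_algOf hK (hclosed K hK)
    · exact mem_latOf_Rk1_of_le_of_le hjoin hmeet hKc hNK hKNh

lemma mMinus_M (hNhc : IsClosed (Nh : Set X)) (hNNh : N ≤ Nh) (hmeet : M ⊓ Nh = ⊥)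
    (hMN : ¬ M ≤ N) : mMinus 𝔓 M = Nh := by
  refine le_antisymm (cJoin_le hNhc ?_) (le_cJoin ⟨by simp, fun hMNh => hMN ?_⟩)
  · rintro K ⟨hK, hMK⟩
    simp only [Set.mem_insert_iff, Set.mem_singleton_iff] at hK
    rcases hK with rfl | rfl | rfl | rfl | rfl
    · exact bot_le
    · exact absurd le_rfl hMK
    · exact hNNh
    · exact le_rfl
    · exact absurd le_top hMK
  · exact (le_inf le_rfl hMNh).trans (hmeet.le.trans bot_le)

lemma mMinus_eq_top (hjoin : cJoin2 M N = ⊤) {K : Submodule ℂ X} (hKM : ¬ K ≤ M)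
    (hKN : ¬ K ≤ N) : mMinus 𝔓 K = ⊤ :=
  top_le_iff.1 (hjoin ▸ cJoin2_le_cJoin ⟨by simp, hKM⟩ ⟨by simp, hKN⟩)

lemma nStar_N (hNc : IsClosed (N : Set X)) (hNhc : IsClosed (Nh : Set X)) (hNNh : N < Nh)
    (hjoin : cJoin2 M N = ⊤) (hmeet : M ⊓ Nh = ⊥) : nStar 𝔓 N = Nh := by
  have hMN := not_le_N_of_cJoin2_eq_top hNc hNNh hjoin
  refine le_antisymm (sInf_le ⟨M, by simp, hMN, (mMinus_M hNhc hNNh.le hmeet hMN).symm⟩)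
    (le_sInf ?_)
  rintro _ ⟨K, hK, hKN, rfl⟩
  simp only [Set.mem_insert_iff, Set.mem_singleton_iff] at hK
  rcases hK with rfl | rfl | rfl | rfl | rfl
  · exact absurd bot_le hKN
  · rw [mMinus_M hNhc hNNh.le hmeet hKN]
  · exact absurd le_rfl hKN
  · exact le_top.trans (mMinus_eq_top hjoin (not_le_M_of_Nh_le hNNh hmeet le_rfl) hKN).ge
  · exact le_top.trans (mMinus_eq_top hjoin (not_le_M_of_Nh_le hNNh hmeet le_top) hKN).ge

end Pentagon

theorem pentagon_lat_rankOne_general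
    {X : Type*} [NormedAddCommGroup X] [NormedSpace ℂ X]
    (M N Nh : Submodule ℂ X)
    (hMc : IsClosed (M : Set X)) (hNc : IsClosed (N : Set X)) (hNhc : IsClosed (Nh : Set X))
    (hNNh : N < Nh) (hjoin : cJoin2 M N = ⊤) (hmeet : M ⊓ Nh = ⊥) :
    latOf (Rk1 (algOf ({⊥, M, N, Nh, ⊤} : Set (Submodule ℂ X)))) =
      ({⊥, M, N, Nh, ⊤} : Set (Submodule ℂ X)) ∪
        {K | IsClosed (K : Set X) ∧ N ≤ K ∧ K ≤ Nh} ∧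
    nStar ({⊥, M, N, Nh, ⊤} : Set (Submodule ℂ X)) N = Nh ∧
    nStar ({⊥, M, N, Nh, ⊤} : Set (Submodule ℂ X)) N ≠ N := by
  have hstar := Pentagon.nStar_N hNc hNhc hNNh hjoin hmeet
  exact ⟨Pentagon.latOf_Rk1_algOf_eq hMc hNc hNhc hNNh.le hjoin hmeet, hstar, hstar.trans_ne hNNh.ne'⟩

/-- For a pentagon subspace lattice 𝔓 = {0, M, N, N̂, X}, the closed subspaces invariant
under all rank-one operators of Alg(𝔓) are exactly 𝔓 ∪ [N, N̂]; in particular N_* = N̂ ≠ N,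
so 𝔓 is not strongly reflexive. -/
theorem pentagon_lat_rankOne
    {X : Type*} [NormedAddCommGroup X] [NormedSpace ℂ X] [CompleteSpace X]
    (M N Nh : Submodule ℂ X)
    (hMc : IsClosed (M : Set X)) (hNc : IsClosed (N : Set X)) (hNhc : IsClosed (Nh : Set X))
    (hM0 : M ≠ ⊥) (hM1 : M ≠ ⊤) (hN0 : N ≠ ⊥) (hNh1 : Nh ≠ ⊤)
    (hNNh : N < Nh) (hjoin : cJoin2 M N = ⊤) (hmeet : M ⊓ Nh = ⊥) :
    latOf (Rk1 (algOf ({⊥, M, N, Nh, ⊤} : Set (Submodule ℂ X)))) =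
      ({⊥, M, N, Nh, ⊤} : Set (Submodule ℂ X)) ∪
        {K | IsClosed (K : Set X) ∧ N ≤ K ∧ K ≤ Nh} ∧
    nStar ({⊥, M, N, Nh, ⊤} : Set (Submodule ℂ X)) N = Nh ∧
    nStar ({⊥, M, N, Nh, ⊤} : Set (Submodule ℂ X)) N ≠ N :=
  pentagon_lat_rankOne_general M N Nh hMc hNc hNhc hNNh hjoin hmeet
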